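/- Let t = (x¹,…,x^{2n}) ∈ ℝ^{2n} and ξ^k = x^k + √−1 x^{n+k}, and let α(t) = 1 + (1/2)(Σ_{k=1}^n x^k e_k + Σ_{k=1}^n x^{n+k} e_{n+k+1})·(√−1 e_0 + e_{n+1}) in the complexified Clifford algebra of ℝ^{2n+2}, acting on the spin module as defined. Then α(t)·Σ_{I∌0} Z^I θ_I = Σ_I Z^I θ_I + √−1 Σ_I (Σ_{k∈I} Z^{kI} ξ^k + Σ_{k∉I} Z^{kI} \bar{ξ}^k) θ_{0I}; that is, in the coordinate transformation of the flat twistor space Z(ℝ^{2n}) ≅ ℝ^{2n} × Z, the translation by t acts on homogeneous twistor coordinates by Z^{0J} = √−1·(Σ_{j∈J} Z^{jJ} ξ^j + Σ_{j∉J} Z^{jJ} \bar{ξ}^j) for 0 ∉ J. -/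

import Mathlib

open Complex

/-- The spin module `Δ`, with basis `θ_S` indexed by subsets of `{1,…,n}`. -/
abbrev SpinModule (n : ℕ) : Type := Finset (Fin n) → ℂ

/-- The sign arising when reducing `θ_{iS}` to `± θ_{S Δ {i}}`. -/
def cliffordSign {n : ℕ} (i : Fin n) (S : Finset (Fin n)) : ℂ :=
  (-1 : ℂ) ^ (S.filter (fun j => j < i)).card * (if i ∈ S then 1 else -1)

/-- The Clifford action of `e_i` (`i = 1,…,n`), determined by `e_i θ_I = θ_{iI}`. -/
def genR {n : ℕ} (i : Fin n) : SpinModule n →ₗ[ℂ] SpinModule n where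
  toFun f := fun S => cliffordSign i S * f (symmDiff S {i})
  map_add' f g := by funext S; simp [mul_add]
  map_smul' c f := by funext S; simp [smul_eq_mul]; ring

/-- The Clifford action of `e_{n+i}`, determined by
`e_{n+i} θ_I = √-1 θ_{iI}` if `i ∉ I` and `-√-1 θ_{iI}` if `i ∈ I`. -/
def genI {n : ℕ} (i : Fin n) : SpinModule n →ₗ[ℂ] SpinModule n where
  toFun f := fun S =>
    (if i ∈ S then Complex.I else -Complex.I) * (cliffordSign i S * f (symmDiff S {i}))
  map_add' f g := by funext S; simp [mul_add]
  map_smul' c f := by funext S; simp [smul_eq_mul]; ring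

/-- The `2n` Clifford generators `e_1,…,e_n, e_{n+1},…,e_{2n}`, indexed by
`Bool × Fin n` (`(false, i) ↦ e_i`, `(true, i) ↦ e_{n+i}`). -/
def cliffordGen {n : ℕ} (a : Bool × Fin n) : SpinModule n →ₗ[ℂ] SpinModule n :=
  if a.1 then genI a.2 else genR a.2

/-- `θ_L` for an arbitrary multi-index (list) `L`, via `θ_L = e_{l₁} ⋯ e_{lₘ} θ_∅`. -/
def thetaList {n : ℕ} (L : List (Fin n)) : SpinModule n :=
  L.foldr (fun i f => genR i f) (Pi.single (∅ : Finset (Fin n)) 1)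

/-- The coordinate `Z^L` of `ψ = Σ_S Z^S θ_S` for an arbitrary multi-index `L`,
extended by the relations `θ_{iiI} = −θ_I` and `θ_{ijI} = −θ_{jiI}`. -/
noncomputable def Zcoord {n : ℕ} (ψ : SpinModule n) (L : List (Fin n)) : ℂ :=
  ∑ S : Finset (Fin n), thetaList L S * ψ S

/-- The operator `α(t) = 1 + (1/2)(Σ_k x^k e_k + Σ_k x^{n+k} e_{n+k+1})(√−1 e₀ + e_{n+1})`
on the spin module `Δ'` of `Spin(2n+2)`, for a translation `t ∈ ℝ^{2n}` with complex
coordinates `ξ^k = x^k + √−1 x^{n+k}`.  Here `Δ'` has basis `θ_I` indexed by subsets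
of `{0,1,…,n}`; `e_i` (`0 ≤ i ≤ n`) is `genR i`, and `e_{n+1+i}` is `genI i`. -/
noncomputable def translationOp (n : ℕ) (ξ : Fin n → ℂ) :
    SpinModule (n + 1) →ₗ[ℂ] SpinModule (n + 1) :=
  LinearMap.id + (1 / 2 : ℂ) •
    ((∑ k : Fin n, (((ξ k).re : ℂ) • genR k.succ + ((ξ k).im : ℂ) • genI k.succ)) ∘ₗ
      (Complex.I • genR (0 : Fin (n + 1)) + genI (0 : Fin (n + 1))))

lemma genR_apply {n : ℕ} (i : Fin n) (f : SpinModule n) (S : Finset (Fin n)) :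
    genR i f S = cliffordSign i S * f (symmDiff S {i}) := rfl

lemma genI_apply {n : ℕ} (i : Fin n) (f : SpinModule n) (S : Finset (Fin n)) :
    genI i f S
      = (if i ∈ S then Complex.I else -Complex.I)
        * (cliffordSign i S * f (symmDiff S {i})) := rfl

lemma symmDiff_singleton_eq_iff {n : ℕ} {S T : Finset (Fin n)} {a : Fin n} :
    symmDiff S {a} = T ↔ S = symmDiff T {a} := by
  constructor <;> rintro rfl <;> simp [symmDiff_symmDiff_cancel_right]

lemma mem_symmDiff_singleton {n : ℕ} {S : Finset (Fin n)} {a b : Fin n} :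
    b ∈ symmDiff S {a} ↔ (b ∈ S ∧ b ≠ a) ∨ (b = a ∧ a ∉ S) := by
  simp [Finset.mem_symmDiff]; aesop

lemma symmDiff_singleton_of_not_mem {n : ℕ} {S : Finset (Fin n)} {a : Fin n} (h : a ∉ S) :
    symmDiff S {a} = insert a S := by
  ext b; simp [mem_symmDiff_singleton, Finset.mem_insert]; aesop

lemma symmDiff_singleton_of_mem {n : ℕ} {S : Finset (Fin n)} {a : Fin n} (h : a ∈ S) :
    symmDiff S {a} = S.erase a := by
  ext b; simp [mem_symmDiff_singleton, Finset.mem_erase]; aesop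

lemma genR_single {n : ℕ} (a : Fin n) (T : Finset (Fin n)) (ha : ∀ b ∈ T, a < b) :
    genR a (Pi.single T 1) = Pi.single (insert a T) 1 := by
  have haT : a ∉ T := fun h => lt_irrefl a (ha a h)
  funext S
  rw [genR_apply, Pi.single_apply, Pi.single_apply]
  by_cases h : symmDiff S {a} = T
  · rw [symmDiff_singleton_eq_iff] at h
    subst h
    rw [symmDiff_singleton_of_not_mem haT]
    have hf : (insert a T).filter (fun j => j < a) = ∅ := by
      apply Finset.filter_eq_empty_iff.mpr
      intro b hb
      simp only [Finset.mem_insert] at hb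
      rcases hb with rfl | hb
      · exact lt_irrefl _
      · exact not_lt_of_gt (ha b hb)
    have h2 : symmDiff (insert a T) {a} = T := by
      rw [symmDiff_singleton_of_mem (Finset.mem_insert_self a T), Finset.erase_insert haT]
    simp [cliffordSign, hf, h2, Finset.mem_insert_self]
  · have hS : S ≠ insert a T := by
      intro hS; apply h
      rw [symmDiff_singleton_eq_iff, hS, symmDiff_singleton_of_not_mem haT]
    simp [h, hS]

lemma thetaList_sorted {n : ℕ} : ∀ (L : List (Fin n)), L.Pairwise (· < ·) →
    thetaList L = Pi.single L.toFinset 1 := by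
  intro L
  induction L with
  | nil => intro _; simp [thetaList]
  | cons a L ih =>
    intro hs
    have hL := hs.of_cons
    have := List.pairwise_cons.mp hs
    show genR a (thetaList L) = _
    rw [ih hL, genR_single a L.toFinset (fun b hb => this.1 b (List.mem_toFinset.mp hb))]
    simp

lemma Zcoord_cons_sort {n : ℕ} (ψ : SpinModule n) (i : Fin n) (T : Finset (Fin n)) :
    Zcoord ψ (i :: T.sort (· ≤ ·)) =
      cliffordSign i (symmDiff T {i}) * ψ (symmDiff T {i}) := by
  unfold Zcoord
  have h : thetaList (i :: T.sort (· ≤ ·)) = genR i (Pi.single T 1) := by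
    show genR i (thetaList _) = _
    rw [thetaList_sorted _ (Finset.sortedLT_sort T).pairwise]
    simp
  rw [h]
  rw [Finset.sum_eq_single (symmDiff T {i})]
  · rw [genR_apply, symmDiff_symmDiff_cancel_right]
    simp
  · intro S _ hS
    rw [genR_apply, Pi.single_apply, if_neg, mul_zero, zero_mul]
    rw [symmDiff_singleton_eq_iff]
    exact hS
  · intro h; exact absurd (Finset.mem_univ _) h

lemma erase_symmDiff_comm {n : ℕ} (S : Finset (Fin (n+1))) (i : Fin (n+1)) (hi : i ≠ 0) :
    (symmDiff S {i}).erase 0 = symmDiff (S.erase 0) {i} := by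
  ext b
  simp only [Finset.mem_erase, mem_symmDiff_singleton]
  aesop

lemma sign_erase {n : ℕ} (S : Finset (Fin (n+1))) (h0 : (0 : Fin (n+1)) ∈ S)
    (i : Fin (n+1)) (hi : i ≠ 0) :
    cliffordSign i (symmDiff (S.erase 0) {i}) = cliffordSign i S := by
  have h0i : (0 : Fin (n+1)) < i := Fin.pos_of_ne_zero hi
  have hmem : (i ∈ symmDiff (S.erase 0) {i}) ↔ i ∉ S := by
    rw [mem_symmDiff_singleton]
    simp [Finset.mem_erase, hi]
  have h0U : (0 : Fin (n+1)) ∉ symmDiff (S.erase 0) {i} := by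
    rw [mem_symmDiff_singleton]
    simp [hi.symm, Finset.mem_erase]
  have hfilt : S.filter (fun j => j < i)
      = insert 0 ((symmDiff (S.erase 0) {i}).filter (fun j => j < i)) := by
    ext b
    simp only [Finset.mem_filter, Finset.mem_insert, mem_symmDiff_singleton, Finset.mem_erase]
    constructor
    · rintro ⟨hb, hbi⟩
      by_cases hb0 : b = 0
      · exact Or.inl hb0
      · exact Or.inr ⟨Or.inl ⟨⟨hb0, hb⟩, ne_of_lt hbi⟩, hbi⟩
    · rintro (rfl | ⟨(⟨⟨_, hb⟩, _⟩ | ⟨rfl, h⟩), hbi⟩)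
      · exact ⟨h0, h0i⟩
      · exact ⟨hb, hbi⟩
      · exact absurd hbi (lt_irrefl _)
  have h0f : (0 : Fin (n+1)) ∉ (symmDiff (S.erase 0) {i}).filter (fun j => j < i) :=
    fun h => h0U (Finset.mem_filter.mp h).1
  rw [cliffordSign, cliffordSign, hfilt, Finset.card_insert_of_notMem h0f, pow_succ]
  by_cases hiS : i ∈ S
  · rw [if_pos hiS, if_neg (by rw [hmem]; exact fun h => h hiS)]
    ring
  · rw [if_neg hiS, if_pos (hmem.mpr hiS)]
    ring

lemma conj_eq_re_sub_im' (z : ℂ) :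
    (starRingEnd ℂ) z = (z.re : ℂ) - (z.im : ℂ) * Complex.I := by
  simp [Complex.ext_iff]

/-- The coordinate transformation of the flat twistor space `Z(ℝ^{2n}) ≅ ℝ^{2n} × Z`:
for `ψ = Σ_{I∌0} Z^I θ_I`,
`α(t)·ψ = Σ_I Z^I θ_I + √−1 Σ_I (Σ_{k∈I} Z^{kI} ξ^k + Σ_{k∉I} Z^{kI} ξ̄^k) θ_{0I}`. -/
theorem translation_on_twistor_coordinates (n : ℕ) (ξ : Fin n → ℂ)
    (ψ : SpinModule (n + 1)) (hψ : ∀ S : Finset (Fin (n + 1)), (0 : Fin (n + 1)) ∈ S → ψ S = 0) :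
    translationOp n ξ ψ = fun S : Finset (Fin (n + 1)) =>
      if (0 : Fin (n + 1)) ∈ S then
        Complex.I * ∑ k : Fin n,
          Zcoord ψ (k.succ :: (S.erase (0 : Fin (n + 1))).sort (· ≤ ·))
            * (if k.succ ∈ S then ξ k else (starRingEnd ℂ) (ξ k))
      else ψ S := by
  have hg : ∀ S' : Finset (Fin (n+1)),
      (Complex.I • genR (0 : Fin (n+1)) + genI (0 : Fin (n+1))) ψ S'
        = if (0 : Fin (n+1)) ∈ S' then 2 * Complex.I * ψ (S'.erase 0) else 0 := by
    intro S'
    rw [LinearMap.add_apply, Pi.add_apply, LinearMap.smul_apply, Pi.smul_apply,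
      genR_apply, genI_apply, smul_eq_mul]
    by_cases h : (0 : Fin (n+1)) ∈ S'
    · rw [if_pos h, if_pos h, symmDiff_singleton_of_mem h]
      have hf : S'.filter (fun j => j < (0 : Fin (n+1))) = ∅ :=
        Finset.filter_eq_empty_iff.mpr (fun b _ hb => absurd hb (Fin.not_lt_zero b))
      have hs : cliffordSign (0 : Fin (n+1)) S' = 1 := by
        simp [cliffordSign, hf, h]
      rw [hs]; ring
    · rw [if_neg h, if_neg h]
      have hz : ψ (symmDiff S' {0}) = 0 := by
        apply hψ
        rw [mem_symmDiff_singleton]; exact Or.inr ⟨rfl, h⟩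
      rw [hz]; ring
  funext S
  have hL : translationOp n ξ ψ S = ψ S + (1/2 : ℂ) * ∑ k : Fin n,
      (((ξ k).re : ℂ) * ((genR k.succ) ((Complex.I • genR (0 : Fin (n+1))
          + genI (0 : Fin (n+1))) ψ) S)
        + ((ξ k).im : ℂ) * ((genI k.succ) ((Complex.I • genR (0 : Fin (n+1))
          + genI (0 : Fin (n+1))) ψ) S)) := by
    simp only [translationOp, LinearMap.add_apply, LinearMap.id_apply, LinearMap.smul_apply,
      LinearMap.comp_apply, LinearMap.sum_apply, Pi.add_apply, Pi.smul_apply,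
      Finset.sum_apply, smul_eq_mul]
  rw [hL]
  by_cases h0 : (0 : Fin (n+1)) ∈ S
  · simp only [if_pos h0]
    rw [hψ S h0, zero_add, Finset.mul_sum, Finset.mul_sum]
    apply Finset.sum_congr rfl
    intro k _
    have hk0 : (k.succ : Fin (n+1)) ≠ 0 := Fin.succ_ne_zero k
    have h0k : (0 : Fin (n+1)) ∈ symmDiff S {k.succ} := by
      rw [mem_symmDiff_singleton]; exact Or.inl ⟨h0, fun h => hk0 h.symm⟩
    rw [genR_apply, genI_apply, hg, if_pos h0k,
      Zcoord_cons_sort, sign_erase S h0 k.succ hk0, ← erase_symmDiff_comm S k.succ hk0]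
    by_cases hks : k.succ ∈ S
    · rw [if_pos hks, if_pos hks]
      linear_combination (Complex.I * cliffordSign k.succ S
        * ψ ((symmDiff S {k.succ}).erase 0)) * (Complex.re_add_im (ξ k))
    · rw [if_neg hks, if_neg hks, conj_eq_re_sub_im' (ξ k)]
      ring
  · simp only [if_neg h0]
    have hz : ∀ k : Fin n,
        ((Complex.I • genR (0 : Fin (n+1)) + genI (0 : Fin (n+1))) ψ)
          (symmDiff S {k.succ}) = 0 := by
      intro k
      rw [hg, if_neg]
      rw [mem_symmDiff_singleton]
      rintro (⟨h, _⟩ | ⟨h, _⟩)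
      · exact h0 h
      · exact Fin.succ_ne_zero k h.symm
    have : ∀ k ∈ Finset.univ, (((ξ k).re : ℂ) * ((genR k.succ) ((Complex.I • genR (0 : Fin (n+1))
          + genI (0 : Fin (n+1))) ψ) S)
        + ((ξ k).im : ℂ) * ((genI k.succ) ((Complex.I • genR (0 : Fin (n+1))
          + genI (0 : Fin (n+1))) ψ) S)) = 0 := by
      intro k _
      rw [genR_apply, genI_apply, hz k]
      ring
    rw [Finset.sum_congr rfl this, Finset.sum_const_zero, mul_zero, add_zero]
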